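/- Let $N \geq 5$ and $\tau = 1 + \bar\eta$ with $\bar\eta > 0$ small enough that $\frac{N-2}{2} - \frac{N-2}{N+2}\tau > 1$. Let $x_1, \dots, x_k$ be $k$ equally spaced points on a circle of radius $r$ in $\mathbb{R}^2 \times \{0\} \subset \mathbb{R}^N$ with $k \leq r$. Then there is a constant $C$ such that for every $y$ with $|y - x_1| \leq |y - x_j|$ for all $j$: $\left(\sum_{j=2}^{k} \frac{1}{(1+|y-x_j|)^{N-2}}\right)^{\frac{N+2}{N-2}} \leq C \left(\frac{k}{r}\right)^{\frac{N+2}{2}-\tau} \frac{1}{(1+|y-x_1|)^{\frac{N+2}{2}+\tau}}$. -/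

import Mathlib

/-!
Write `a = (N-2)/2 + (N-2)τ/(N+2)` and `b = (N-2)/2 - (N-2)τ/(N+2) > 1`, so `a + b = N - 2`.
Splitting the exponent, `|y - x_1| ≤ |y - x_j|` and `|x_j - x_1| ≤ 2 |y - x_j|` give
`(1 + |y - x_j|)^{-(N-2)} ≤ (2 / |x_j - x_1|)^b (1 + |y - x_1|)^{-a}`.
Jordan's inequality `sin t ≥ 2t/π` bounds `|x_j - x_1|` below by `4r min(j-1, k-j+1) / k`, so the
sum over `j` is at most `(k/r)^b` times twice the convergent series `∑ n^{-b}`, times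
`(1 + |y - x_1|)^{-a}`. Raising to the power `(N+2)/(N-2)` turns the exponents `b` and `a`
into `(N+2)/2 - τ` and `(N+2)/2 + τ`.
-/

open Real Finset

/-- `k` equally spaced points on the circle of radius `r` in the first two
coordinates of `ℝ^N` (indexed by `j = 1, ..., k`). -/
noncomputable def circlePoint (N k : ℕ) (r : ℝ) (j : ℕ) : EuclideanSpace ℝ (Fin N) :=
  WithLp.toLp 2 fun i =>
    if (i : ℕ) = 0 then r * Real.cos (2 * ((j : ℝ) - 1) * π / k)
    else if (i : ℕ) = 1 then r * Real.sin (2 * ((j : ℝ) - 1) * π / k)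
    else 0

theorem norm_circlePoint_sub_circlePoint_one {N : ℕ} (hN : 2 ≤ N) (k : ℕ) {r : ℝ} (hr : 0 ≤ r)
    (j : ℕ) :
    ‖circlePoint N k r j - circlePoint N k r 1‖ = 2 * r * |sin (((j : ℝ) - 1) * π / k)| := by
  obtain ⟨n, rfl⟩ : ∃ n, N = n + 2 := ⟨N - 2, by omega⟩
  set θ := ((j : ℝ) - 1) * π / k
  have h2θ : 2 * ((j : ℝ) - 1) * π / k = 2 * θ := by ring
  have hcoord : ∑ i, ‖(circlePoint (n + 2) k r j - circlePoint (n + 2) k r 1) i‖ ^ 2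
      = (r * cos (2 * θ) - r) ^ 2 + (r * sin (2 * θ)) ^ 2 := by
    simp [Fin.sum_univ_succ, circlePoint, h2θ]
  rw [EuclideanSpace.norm_eq, hcoord, ← sqrt_sq (by positivity : 0 ≤ 2 * r * |sin θ|),
    cos_two_mul, sin_two_mul, mul_pow _ |_|, sq_abs]
  congr 1
  linear_combination (4 * r ^ 2 * cos θ ^ 2 - 4 * r ^ 2) * sin_sq_add_cos_sq θ

theorem two_div_pi_mul_min_le_sin {x : ℝ} (h0 : 0 ≤ x) (hπ : x ≤ π) :
    2 / π * min x (π - x) ≤ sin x := by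
  rcases le_total x (π - x) with h | h
  · rw [min_eq_left h]
    exact mul_le_sin h0 (by linarith)
  · rw [min_eq_right h, ← sin_pi_sub]
    exact mul_le_sin (by linarith) (by linarith)

theorem two_mul_min_div_le_sin_mul_pi_div {m k : ℕ} (hm : m ≤ k) :
    2 * ((min m (k - m) : ℕ) : ℝ) / k ≤ sin (m * π / k) := by
  rcases Nat.eq_zero_or_pos k with rfl | hk
  · simp
  have hk' : (0 : ℝ) < k := by exact_mod_cast hk
  have hmk : (m : ℝ) ≤ k := by exact_mod_cast hm
  have hx : m * π / k ≤ π := by rw [div_le_iff₀ hk']; nlinarith [pi_pos]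
  have hπx : π - m * π / k = (k - m) * π / k := by field_simp
  convert two_div_pi_mul_min_le_sin (by positivity) hx using 1
  rw [hπx, min_div_div_right hk'.le, ← min_mul_of_nonneg _ _ pi_pos.le, Nat.cast_min,
    Nat.cast_sub hm]
  field_simp

theorem mul_min_div_le_norm_circlePoint_sub_circlePoint_one {N : ℕ} (hN : 2 ≤ N) {k : ℕ} {r : ℝ}
    (hr : 0 ≤ r) {m : ℕ} (hm : m ≤ k) :
    4 * r * ((min m (k - m) : ℕ) : ℝ) / k ≤ ‖circlePoint N k r (m + 1) - circlePoint N k r 1‖ := by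
  rw [norm_circlePoint_sub_circlePoint_one hN k hr, Nat.cast_succ, add_sub_cancel_right]
  calc 4 * r * ((min m (k - m) : ℕ) : ℝ) / k = 2 * r * (2 * ((min m (k - m) : ℕ) : ℝ) / k) := by
        ring
    _ ≤ 2 * r * |sin (m * π / k)| := by
        gcongr
        exact (two_mul_min_div_le_sin_mul_pi_div hm).trans (le_abs_self _)

theorem one_div_one_add_norm_rpow_le {E : Type*} [SeminormedAddCommGroup E] {y p q : E}
    (hpq : ‖y - p‖ ≤ ‖y - q‖) {δ : ℝ} (hδ : 0 < δ) (hδpq : δ ≤ ‖q - p‖) {a b : ℝ} (ha : 0 ≤ a)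
    (hb : 0 ≤ b) :
    1 / (1 + ‖y - q‖) ^ (a + b) ≤ (2 / δ) ^ b * (1 / (1 + ‖y - p‖) ^ a) := by
  have hδq : δ / 2 ≤ 1 + ‖y - q‖ := by
    have := norm_sub_le_norm_sub_add_norm_sub q y p
    rw [norm_sub_rev q y] at this
    linarith
  rw [← inv_div δ 2, inv_rpow (by positivity), ← one_div, div_mul_div_comm, one_mul,
    rpow_add (by positivity), mul_comm ((1 + ‖y - q‖) ^ a)]
  gcongr

theorem sum_le_tsum_comp_of_injOn {g : ℕ → ℝ} (hg : Summable g) (hg0 : ∀ n, 0 ≤ g n)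
    {s : Finset ℕ} {φ : ℕ → ℕ} (hφ : Set.InjOn φ s) : ∑ j ∈ s, g (φ j) ≤ ∑' n, g n := by
  rw [← sum_image hφ]
  exact hg.sum_le_tsum _ fun n _ => hg0 n

theorem sum_Icc_rpow_inv_add_rpow_inv_le (k : ℕ) {b : ℝ} (hb : 1 < b) :
    ∑ j ∈ Icc 2 k, ((((j - 1 : ℕ) : ℝ) ^ b)⁻¹ + (((k + 1 - j : ℕ) : ℝ) ^ b)⁻¹)
      ≤ 2 * ∑' n : ℕ, ((n : ℝ) ^ b)⁻¹ := by
  have hg : Summable fun n : ℕ => ((n : ℝ) ^ b)⁻¹ := Real.summable_nat_rpow_inv.mpr hb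
  have hg0 (n : ℕ) : 0 ≤ ((n : ℝ) ^ b)⁻¹ := by positivity
  rw [sum_add_distrib, two_mul]
  gcongr
  · exact sum_le_tsum_comp_of_injOn hg hg0 fun i hi j hj h => by
      simp only [coe_Icc, Set.mem_Icc] at hi hj; omega
  · exact sum_le_tsum_comp_of_injOn hg hg0 fun i hi j hj h => by
      simp only [coe_Icc, Set.mem_Icc] at hi hj; omega

theorem one_div_one_add_norm_sub_circlePoint_rpow_le {N : ℕ} (hN : 2 ≤ N) {k : ℕ} {r : ℝ}
    (hr : 0 < r) {y : EuclideanSpace ℝ (Fin N)} {m : ℕ} (hm : 1 ≤ m) (hmk : m < k)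
    (hy : ‖y - circlePoint N k r 1‖ ≤ ‖y - circlePoint N k r (m + 1)‖) {a b : ℝ} (ha : 0 ≤ a)
    (hb : 0 ≤ b) :
    1 / (1 + ‖y - circlePoint N k r (m + 1)‖) ^ (a + b)
      ≤ ((k : ℝ) / (2 * r)) ^ b * (((m : ℝ) ^ b)⁻¹ + (((k - m : ℕ) : ℝ) ^ b)⁻¹)
        * (1 / (1 + ‖y - circlePoint N k r 1‖) ^ a) := by
  set M := min m (k - m)
  have hM : (1 : ℝ) ≤ M := by exact_mod_cast (show 1 ≤ M by omega)
  have hk : (0 : ℝ) < k := by exact_mod_cast (show 0 < k by omega)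
  have hMm : ((M : ℝ) ^ b)⁻¹ ≤ ((m : ℝ) ^ b)⁻¹ + (((k - m : ℕ) : ℝ) ^ b)⁻¹ := by
    rcases min_choice m (k - m) with h | h <;> simp only [M, h]
    · exact le_add_of_nonneg_right (by positivity)
    · exact le_add_of_nonneg_left (by positivity)
  calc 1 / (1 + ‖y - circlePoint N k r (m + 1)‖) ^ (a + b)
      ≤ (2 / (4 * r * M / k)) ^ b * (1 / (1 + ‖y - circlePoint N k r 1‖) ^ a) :=
        one_div_one_add_norm_rpow_le hy (by positivity)
          (mul_min_div_le_norm_circlePoint_sub_circlePoint_one hN hr.le hmk.le) ha hb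
    _ = ((k : ℝ) / (2 * r)) ^ b * ((M : ℝ) ^ b)⁻¹ * (1 / (1 + ‖y - circlePoint N k r 1‖) ^ a) := by
        rw [← inv_rpow (by positivity), ← mul_rpow (by positivity) (by positivity)]
        congr 2
        field_simp
        ring
    _ ≤ _ := by gcongr

theorem sum_Icc_one_div_one_add_norm_sub_circlePoint_rpow_le {N : ℕ} (hN : 2 ≤ N) {k : ℕ} {r : ℝ}
    (hr : 0 < r) {y : EuclideanSpace ℝ (Fin N)}
    (hy : ∀ j, 2 ≤ j → j ≤ k → ‖y - circlePoint N k r 1‖ ≤ ‖y - circlePoint N k r j‖)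
    {a b : ℝ} (ha : 0 ≤ a) (hb : 1 < b) :
    ∑ j ∈ Icc 2 k, 1 / (1 + ‖y - circlePoint N k r j‖) ^ (a + b)
      ≤ 2 * (∑' n : ℕ, ((n : ℝ) ^ b)⁻¹) * ((k : ℝ) / r) ^ b
        * (1 / (1 + ‖y - circlePoint N k r 1‖) ^ a) := by
  set D := 1 / (1 + ‖y - circlePoint N k r 1‖) ^ a
  have hterm : ∀ j ∈ Icc 2 k, 1 / (1 + ‖y - circlePoint N k r j‖) ^ (a + b)
      ≤ ((k : ℝ) / (2 * r)) ^ b * ((((j - 1 : ℕ) : ℝ) ^ b)⁻¹ + (((k + 1 - j : ℕ) : ℝ) ^ b)⁻¹)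
        * D := by
    intro j hj
    rw [mem_Icc] at hj
    obtain ⟨m, rfl⟩ : ∃ m, j = m + 1 := ⟨j - 1, by omega⟩
    rw [Nat.add_sub_cancel, Nat.add_sub_add_right]
    exact one_div_one_add_norm_sub_circlePoint_rpow_le hN hr (by omega) (by omega)
      (hy _ hj.1 hj.2) ha (by linarith)
  calc _ ≤ ∑ j ∈ Icc 2 k, ((k : ℝ) / (2 * r)) ^ b
          * ((((j - 1 : ℕ) : ℝ) ^ b)⁻¹ + (((k + 1 - j : ℕ) : ℝ) ^ b)⁻¹) * D :=
        sum_le_sum hterm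
    _ = ((k : ℝ) / (2 * r)) ^ b
          * (∑ j ∈ Icc 2 k, ((((j - 1 : ℕ) : ℝ) ^ b)⁻¹ + (((k + 1 - j : ℕ) : ℝ) ^ b)⁻¹)) * D := by
        rw [← sum_mul, ← mul_sum]
    _ ≤ ((k : ℝ) / r) ^ b * (2 * ∑' n : ℕ, ((n : ℝ) ^ b)⁻¹) * D := by
        gcongr
        · linarith
        · exact sum_Icc_rpow_inv_add_rpow_inv_le k hb
    _ = _ := by ring

theorem stmt_17 (N : ℕ) (hN : 5 ≤ N) (eta : ℝ) (heta : 0 < eta)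
    (τ : ℝ) (hτ : τ = 1 + eta)
    (hsmall : ((N : ℝ) - 2) / 2 - ((N : ℝ) - 2) / ((N : ℝ) + 2) * τ > 1) :
    ∃ C > (0 : ℝ),
      ∀ (k : ℕ), 2 ≤ k → ∀ r : ℝ, 0 < r → (k : ℝ) ≤ r →
        ∀ y : EuclideanSpace ℝ (Fin N),
          (∀ j, 2 ≤ j → j ≤ k → ‖y - circlePoint N k r 1‖ ≤ ‖y - circlePoint N k r j‖) →
          (∑ j ∈ Finset.Icc 2 k,
              1 / (1 + ‖y - circlePoint N k r j‖) ^ ((N : ℝ) - 2)) ^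
              (((N : ℝ) + 2) / ((N : ℝ) - 2)) ≤
            C * ((k : ℝ) / r) ^ (((N : ℝ) + 2) / 2 - τ) *
              (1 / (1 + ‖y - circlePoint N k r 1‖) ^ (((N : ℝ) + 2) / 2 + τ)) := by
  have hN2 : (0 : ℝ) < N - 2 := by
    have : (5 : ℝ) ≤ N := by exact_mod_cast hN
    linarith
  set a := ((N : ℝ) - 2) / 2 + ((N : ℝ) - 2) / ((N : ℝ) + 2) * τ
  set b := ((N : ℝ) - 2) / 2 - ((N : ℝ) - 2) / ((N : ℝ) + 2) * τ
  set p := ((N : ℝ) + 2) / ((N : ℝ) - 2)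
  set S := ∑' n : ℕ, ((n : ℝ) ^ b)⁻¹
  have ha : 0 ≤ a := by
    have : 0 ≤ τ := by linarith
    positivity
  have hbp : b * p = ((N : ℝ) + 2) / 2 - τ := by simp only [b, p]; field_simp
  have hap : a * p = ((N : ℝ) + 2) / 2 + τ := by simp only [a, p]; field_simp
  have hS : 0 < S :=
    (Real.summable_nat_rpow_inv.mpr hsmall).tsum_pos (fun n => by positivity) 1 (by simp)
  refine ⟨(2 * S) ^ p, by positivity, fun k _ r hr _ y hy => ?_⟩
  have hsum := sum_Icc_one_div_one_add_norm_sub_circlePoint_rpow_le (by omega) hr hy ha hsmall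
  rw [show a + b = (N : ℝ) - 2 by ring] at hsum
  calc _ ≤ (2 * S * ((k : ℝ) / r) ^ b * (1 / (1 + ‖y - circlePoint N k r 1‖) ^ a)) ^ p := by
        gcongr
    _ = _ := by
        rw [mul_rpow (by positivity) (by positivity), mul_rpow (by positivity) (by positivity),
          ← rpow_mul (by positivity), hbp, one_div, inv_rpow (by positivity),
          ← rpow_mul (by positivity), hap, one_div]
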